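/- Every subgraph of a funnel is a funnel; in particular, being a funnel is a hereditary property: deleting vertices or arcs from a funnel yields a funnel. -/

import Mathlib

/-!
A DAG is a funnel exactly when no merge vertex (indegree at least 2) reaches, possibly trivially,
a split vertex (outdegree at least 2); this condition passes to subgraphs, since degrees and
reachability only shrink.

If a merge vertex `u` reaches a split vertex `v`, take a source-sink path entering `u` along one
arc, following a walk from `u` to `v`, and leaving `v` along one arc. Its private arc lies up to
`v` or from `u` on; re-routing after `v` in the first case, before `u` in the second, gives a
second source-sink path through it.

Conversely, every vertex has no merge vertex behind it or no split vertex ahead of it; the source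
of a path is of the first kind and its sink of the second. Hence some arc `(x, y)` of the path goes
from the first kind to the second, and every source-sink path through it is determined backwards
from `x` and forwards from `y`, so the arc is private.
-/

variable {V : Type*} [Fintype V] [DecidableEq V]

/-- Arc adjacency of a digraph given by its finite arc set. -/
def ArcAdj (A : Finset (V × V)) : V → V → Prop := fun u v => (u, v) ∈ A

/-- A digraph is a DAG if it contains no directed cycle. -/
def IsDAG (A : Finset (V × V)) : Prop := ∀ v : V, ¬ Relation.TransGen (ArcAdj A) v v

/-- Indegree of a vertex. -/
def inDeg (A : Finset (V × V)) (v : V) : ℕ := (A.filter fun e => e.2 = v).card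

/-- Outdegree of a vertex. -/
def outDeg (A : Finset (V × V)) (v : V) : ℕ := (A.filter fun e => e.1 = v).card

/-- A source is a vertex of indegree 0. -/
def IsSource (A : Finset (V × V)) (v : V) : Prop := inDeg A v = 0

/-- A sink is a vertex of outdegree 0. -/
def IsSink (A : Finset (V × V)) (v : V) : Prop := outDeg A v = 0

/-- The arcs (consecutive pairs of vertices) of a path given as a list of vertices. -/
def arcsOf (p : List V) : List (V × V) := p.zip p.tail

/-- A source-sink path: a directed path (with at least one arc) starting at a
source and ending at a sink. -/
def IsSourceSinkPath (A : Finset (V × V)) (p : List V) : Prop :=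
  2 ≤ p.length ∧ List.Chain' (ArcAdj A) p ∧ p.Nodup ∧
  (∃ s, p.head? = some s ∧ IsSource A s) ∧
  (∃ t, p.getLast? = some t ∧ IsSink A t)

/-- An arc is private if exactly one source-sink path contains it. -/
def IsPrivate (A : Finset (V × V)) (e : V × V) : Prop :=
  ∃! p : List V, IsSourceSinkPath A p ∧ e ∈ arcsOf p

/-- A funnel: every source-sink path contains at least one private arc. -/
def IsFunnel (A : Finset (V × V)) : Prop :=
  ∀ p : List V, IsSourceSinkPath A p → ∃ e ∈ arcsOf p, IsPrivate A e

/-- The arc-deletion distance to a funnel: the minimum number of arcs whose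
deletion turns the digraph into a funnel. -/
noncomputable def funnelDist (A : Finset (V × V)) : ℕ :=
  sInf {k | ∃ B ⊆ A, B.card = k ∧ IsFunnel (A \ B)}

open List Relation

section Relations

variable {α : Type*} {r : α → α → Prop}

theorem exists_reflTransGen_forall_not_rel [Finite α] (hr : ∀ a, ¬ TransGen r a a) (a : α) :
    ∃ b, ReflTransGen r a b ∧ ∀ c, ¬ r b c := by
  have : IsTrans α (flip (TransGen r)) := ⟨fun _ _ _ h₁ h₂ => h₂.trans h₁⟩
  have : Std.Irrefl (flip (TransGen r)) := ⟨hr⟩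
  obtain ⟨b, hab, hmin⟩ := (Finite.wellFounded_of_trans_of_irrefl (flip (TransGen r))).has_min
    {b | ReflTransGen r a b} ⟨a, .refl⟩
  exact ⟨b, hab, fun c hbc => hmin c (hab.tail hbc) (.single hbc)⟩

theorem List.IsChain.tail_eq_of_deterministic {a : α} {l₁ l₂ : List α}
    (h₁ : IsChain r (a :: l₁)) (h₂ : IsChain r (a :: l₂))
    (ht₁ : ∃ t, (a :: l₁).getLast? = some t ∧ ∀ b, ¬ r t b)
    (ht₂ : ∃ t, (a :: l₂).getLast? = some t ∧ ∀ b, ¬ r t b)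
    (hdet : ∀ z, ReflTransGen r a z → ∀ b c, r z b → r z c → b = c) : l₁ = l₂ := by
  induction l₁ generalizing a l₂ with
  | nil =>
    obtain ⟨t, ht, hterm⟩ := ht₁
    obtain rfl : a = t := by simpa using ht
    cases l₂ with
    | nil => rfl
    | cons b l₂ => exact absurd h₂.rel (hterm b)
  | cons b l₁ ih =>
    cases l₂ with
    | nil =>
      obtain ⟨t, ht, hterm⟩ := ht₂
      obtain rfl : a = t := by simpa using ht
      exact absurd h₁.rel (hterm b)
    | cons c l₂ =>
      obtain rfl := hdet a .refl b c h₁.rel h₂.rel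
      rw [ih h₁.tail h₂.tail (by simpa only [getLast?_cons_cons] using ht₁)
        (by simpa only [getLast?_cons_cons] using ht₂) (fun z hz => hdet z (.head h₁.rel hz))]

end Relations

section Walks

omit [Fintype V] [DecidableEq V]

variable {A B : Finset (V × V)} {l m p : List V} {x y : V}

theorem arcsOf_append_cons (l m : List V) (a : V) :
    arcsOf (l ++ a :: m) = arcsOf (l ++ [a]) ++ arcsOf (a :: m) := by
  induction l with
  | nil => simp [arcsOf]
  | cons b l ih =>
    cases l with
    | nil => rfl
    | cons c l => exact congrArg ((b, c) :: ·) ih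

theorem mem_arcsOf_iff : (x, y) ∈ arcsOf p ↔ ∃ l₁ l₂, p = l₁ ++ x :: y :: l₂ := by
  constructor
  · induction p with
    | nil => simp [arcsOf]
    | cons a p ih =>
      cases p with
      | nil => simp [arcsOf]
      | cons b p =>
        intro h
        rcases mem_cons.1 h with h | h
        · obtain ⟨rfl, rfl⟩ := Prod.mk.inj h
          exact ⟨[], p, rfl⟩
        · obtain ⟨l₁, l₂, hp⟩ := ih h
          exact ⟨a :: l₁, l₂, by rw [hp]; rfl⟩
  · rintro ⟨l₁, l₂, rfl⟩
    rw [arcsOf_append_cons]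
    simp [arcsOf]

theorem List.IsInfix.arcsOf_subset (h : l <:+: m) : arcsOf l ⊆ arcsOf m := by
  rintro ⟨x, y⟩ hxy
  obtain ⟨l₁, l₂, rfl⟩ := mem_arcsOf_iff.1 hxy
  obtain ⟨s, t, rfl⟩ := h
  exact mem_arcsOf_iff.2 ⟨s ++ l₁, l₂ ++ t, by simp⟩

theorem mem_arcsOf_append_append {S W T : List V} {e : V × V} (hW : W ≠ [])
    (he : e ∈ arcsOf (S ++ W ++ T)) : e ∈ arcsOf (S ++ W) ∨ e ∈ arcsOf (W ++ T) := by
  obtain ⟨w, W, rfl⟩ := exists_cons_of_ne_nil hW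
  rw [append_assoc, cons_append, arcsOf_append_cons, mem_append] at he
  have hpre : S ++ [w] <+: S ++ w :: W := ⟨W, by simp⟩
  exact he.imp_left fun he => hpre.isInfix.arcsOf_subset he

theorem exists_mem_arcsOf_of_forall_or {P Q : V → Prop} (hPQ : ∀ z, P z ∨ Q z)
    (hp : 2 ≤ p.length) (hs : ∃ s, p.head? = some s ∧ P s) (ht : ∃ t, p.getLast? = some t ∧ Q t) :
    ∃ x y, (x, y) ∈ arcsOf p ∧ P x ∧ Q y := by
  induction p with
  | nil => simp at hp
  | cons a l ih =>
    obtain ⟨s, hs, hPs⟩ := hs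
    obtain rfl : a = s := by simpa using hs
    cases l with
    | nil => simp at hp
    | cons b l =>
      by_cases hb : Q b
      · exact ⟨a, b, mem_cons_self, hPs, hb⟩
      · have hl : l ≠ [] := by
          rintro rfl
          obtain ⟨t, ht, hQt⟩ := ht
          obtain rfl : b = t := by simpa using ht
          exact hb hQt
        obtain ⟨x, y, hxy, hx, hy⟩ := ih (by simpa [Nat.one_le_iff_ne_zero] using hl)
          ⟨b, rfl, (hPQ b).resolve_right hb⟩ (by simpa only [getLast?_cons_cons] using ht)
        exact ⟨x, y, mem_cons_of_mem _ hxy, hx, hy⟩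

theorem arcAdj_mono (h : B ⊆ A) : ArcAdj B ≤ ArcAdj A := fun _ _ hab => h hab

theorem IsDAG.nodup (h : IsDAG A) (hp : IsChain (ArcAdj A) p) : p.Nodup :=
  (isChain_iff_pairwise.1 (hp.imp fun _ _ => TransGen.single)).imp fun hab => by
    rintro rfl
    exact h _ hab

end Walks

section Digraphs

omit [Fintype V]

variable {A B : Finset (V × V)} {p : List V} {u v x y : V}

theorem isSource_iff : IsSource A v ↔ ∀ a, ¬ ArcAdj A a v := by
  simp only [IsSource, inDeg, ArcAdj, Finset.card_eq_zero, Finset.filter_eq_empty_iff, Prod.forall]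
  exact ⟨fun h a ha => h a v ha rfl, fun h a b hab hb => h a (hb ▸ hab)⟩

theorem isSink_iff : IsSink A v ↔ ∀ b, ¬ ArcAdj A v b := by
  simp only [IsSink, outDeg, ArcAdj, Finset.card_eq_zero, Finset.filter_eq_empty_iff, Prod.forall]
  exact ⟨fun h b hb => h v b hb rfl, fun h a b hab ha => h b (ha ▸ hab)⟩

theorem IsSource.eq_of_reflTransGen (hv : IsSource A v) (h : ReflTransGen (ArcAdj A) u v) :
    u = v := by
  rcases h.cases_tail with rfl | ⟨a, -, ha⟩
  · rfl
  · exact absurd ha (isSource_iff.1 hv a)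

theorem IsSink.eq_of_reflTransGen (hv : IsSink A v) (h : ReflTransGen (ArcAdj A) v u) :
    u = v := by
  rcases h.cases_head with rfl | ⟨b, hb, -⟩
  · rfl
  · exact absurd hb (isSink_iff.1 hv b)

theorem inDeg_mono (h : B ⊆ A) : inDeg B v ≤ inDeg A v :=
  Finset.card_le_card (Finset.filter_subset_filter _ h)

theorem outDeg_mono (h : B ⊆ A) : outDeg B v ≤ outDeg A v :=
  Finset.card_le_card (Finset.filter_subset_filter _ h)

theorem eq_of_inDeg_le_one (h : inDeg A v ≤ 1) (hx : (x, v) ∈ A) (hy : (y, v) ∈ A) : x = y :=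
  congrArg Prod.fst <|
    Finset.card_le_one.1 h _ (Finset.mem_filter.2 ⟨hx, rfl⟩) _ (Finset.mem_filter.2 ⟨hy, rfl⟩)

theorem eq_of_outDeg_le_one (h : outDeg A v ≤ 1) (hx : (v, x) ∈ A) (hy : (v, y) ∈ A) : x = y :=
  congrArg Prod.snd <|
    Finset.card_le_one.1 h _ (Finset.mem_filter.2 ⟨hx, rfl⟩) _ (Finset.mem_filter.2 ⟨hy, rfl⟩)

theorem exists_ne_of_two_le_inDeg (h : 2 ≤ inDeg A v) :
    ∃ x y, x ≠ y ∧ (x, v) ∈ A ∧ (y, v) ∈ A := by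
  obtain ⟨⟨x, _⟩, hx, ⟨y, _⟩, hy, hxy⟩ := Finset.one_lt_card.1 h
  simp only [Finset.mem_filter] at hx hy
  obtain ⟨hx, rfl⟩ := hx
  obtain ⟨hy, rfl⟩ := hy
  exact ⟨x, y, by simpa using hxy, hx, hy⟩

theorem exists_ne_of_two_le_outDeg (h : 2 ≤ outDeg A v) :
    ∃ x y, x ≠ y ∧ (v, x) ∈ A ∧ (v, y) ∈ A := by
  obtain ⟨⟨_, x⟩, hx, ⟨_, y⟩, hy, hxy⟩ := Finset.one_lt_card.1 h
  simp only [Finset.mem_filter] at hx hy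
  obtain ⟨hx, rfl⟩ := hx
  obtain ⟨hy, rfl⟩ := hy
  exact ⟨x, y, by simpa using hxy, hx, hy⟩

def NoMergeReachesSplit (A : Finset (V × V)) : Prop :=
  ∀ u v, 2 ≤ inDeg A u → 2 ≤ outDeg A v → ¬ ReflTransGen (ArcAdj A) u v

theorem NoMergeReachesSplit.subset (h : NoMergeReachesSplit A) (hBA : B ⊆ A) :
    NoMergeReachesSplit B := fun u v hu hv huv =>
  h u v (hu.trans (inDeg_mono hBA)) (hv.trans (outDeg_mono hBA))
    (ReflTransGen.mono (arcAdj_mono hBA) _ _ huv)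

def IsWalkFromSource (A : Finset (V × V)) (l : List V) : Prop :=
  IsChain (ArcAdj A) l ∧ ∃ s, l.head? = some s ∧ IsSource A s

def IsWalkToSink (A : Finset (V × V)) (l : List V) : Prop :=
  IsChain (ArcAdj A) l ∧ ∃ t, l.getLast? = some t ∧ IsSink A t

theorem IsSourceSinkPath.isWalkFromSource_of_append {l m : List V}
    (hp : IsSourceSinkPath A (l ++ m)) (hl : l ≠ []) : IsWalkFromSource A l := by
  obtain ⟨-, hc, -, hs, -⟩ := hp
  exact ⟨hc.left_of_append, by simpa only [head?_append_of_ne_nil _ hl] using hs⟩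

theorem IsSourceSinkPath.isWalkToSink_of_append {l m : List V}
    (hp : IsSourceSinkPath A (l ++ m)) (hm : m ≠ []) : IsWalkToSink A m := by
  obtain ⟨-, hc, -, -, ht⟩ := hp
  exact ⟨hc.right_of_append, by simpa only [getLast?_append_of_ne_nil _ hm] using ht⟩

theorem IsWalkToSink.tail_eq {l₁ l₂ : List V}
    (hy : ∀ w, ReflTransGen (ArcAdj A) y w → outDeg A w ≤ 1)
    (h₁ : IsWalkToSink A (y :: l₁)) (h₂ : IsWalkToSink A (y :: l₂)) : l₁ = l₂ := by
  have terminal : ∀ {l : List V}, IsWalkToSink A (y :: l) →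
      ∃ t, (y :: l).getLast? = some t ∧ ∀ b, ¬ ArcAdj A t b := by
    rintro l ⟨-, t, ht, hsink⟩
    exact ⟨t, ht, isSink_iff.1 hsink⟩
  exact h₁.1.tail_eq_of_deterministic h₂.1 (terminal h₁) (terminal h₂)
    fun z hz _ _ => eq_of_outDeg_le_one (hy z hz)

theorem IsWalkFromSource.init_eq {l₁ l₂ : List V}
    (hx : ∀ m, ReflTransGen (ArcAdj A) m x → inDeg A m ≤ 1)
    (h₁ : IsWalkFromSource A (l₁ ++ [x])) (h₂ : IsWalkFromSource A (l₂ ++ [x])) : l₁ = l₂ := by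
  have reversed : ∀ {l : List V}, IsWalkFromSource A (l ++ [x]) →
      IsChain (Function.swap (ArcAdj A)) (x :: l.reverse) ∧
        ∃ s, (x :: l.reverse).getLast? = some s ∧ ∀ b, ¬ Function.swap (ArcAdj A) s b := by
    rintro l ⟨hc, s, hs, hsrc⟩
    have hrev : x :: l.reverse = (l ++ [x]).reverse := by simp
    exact ⟨hrev ▸ isChain_reverse.2 hc, s, by rw [hrev, getLast?_reverse, hs], isSource_iff.1 hsrc⟩
  obtain ⟨hc₁, ht₁⟩ := reversed h₁
  obtain ⟨hc₂, ht₂⟩ := reversed h₂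
  exact reverse_injective <| hc₁.tail_eq_of_deterministic hc₂ ht₁ ht₂
    fun z hz _ _ => eq_of_inDeg_le_one (hx z (reflTransGen_swap.1 hz))

theorem isPrivate_of_forced (hp : IsSourceSinkPath A p) (hxy : (x, y) ∈ arcsOf p)
    (hx : ∀ m, ReflTransGen (ArcAdj A) m x → inDeg A m ≤ 1)
    (hy : ∀ w, ReflTransGen (ArcAdj A) y w → outDeg A w ≤ 1) : IsPrivate A (x, y) := by
  refine ⟨p, ⟨hp, hxy⟩, fun q ⟨hq, hxyq⟩ => ?_⟩
  obtain ⟨p₁, p₂, rfl⟩ := mem_arcsOf_iff.1 hxy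
  obtain ⟨q₁, q₂, rfl⟩ := mem_arcsOf_iff.1 hxyq
  have split : ∀ l₁ l₂ : List V, l₁ ++ x :: y :: l₂ = (l₁ ++ [x]) ++ y :: l₂ := by simp
  rw [split] at hp hq
  obtain rfl := IsWalkFromSource.init_eq hx (hq.isWalkFromSource_of_append (by simp))
    (hp.isWalkFromSource_of_append (by simp))
  obtain rfl := IsWalkToSink.tail_eq hy (hq.isWalkToSink_of_append (cons_ne_nil _ _))
    (hp.isWalkToSink_of_append (cons_ne_nil _ _))
  rfl

theorem NoMergeReachesSplit.isFunnel (h : NoMergeReachesSplit A) : IsFunnel A := by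
  intro p hp
  obtain ⟨hlen, -, -, ⟨s, hs, hsrc⟩, ⟨t, ht, hsink⟩⟩ := id hp
  have hs' : ∀ m, ReflTransGen (ArcAdj A) m s → inDeg A m ≤ 1 := fun m hm => by
    rw [hsrc.eq_of_reflTransGen hm, show inDeg A s = 0 from hsrc]
    exact zero_le_one
  have ht' : ∀ w, ReflTransGen (ArcAdj A) t w → outDeg A w ≤ 1 := fun w hw => by
    rw [hsink.eq_of_reflTransGen hw, show outDeg A t = 0 from hsink]
    exact zero_le_one
  have hsplit : ∀ z, (∀ m, ReflTransGen (ArcAdj A) m z → inDeg A m ≤ 1) ∨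
      (∀ w, ReflTransGen (ArcAdj A) z w → outDeg A w ≤ 1) := by
    intro z
    by_contra! ⟨⟨m, hmz, hm⟩, w, hzw, hw⟩
    exact h m w hm hw (hmz.trans hzw)
  obtain ⟨x, y, hxy, hx, hy⟩ := exists_mem_arcsOf_of_forall_or hsplit hlen ⟨s, hs, hs'⟩ ⟨t, ht, ht'⟩
  exact ⟨(x, y), hxy, isPrivate_of_forced hp hxy hx hy⟩

theorem IsDAG.isSourceSinkPath_append_append (h : IsDAG A) {S W T : List V}
    (hS : IsWalkFromSource A S) (hW : IsChain (ArcAdj A) W) (hT : IsWalkToSink A T)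
    (hSW : ∃ a b, S.getLast? = some a ∧ W.head? = some b ∧ (a, b) ∈ A)
    (hWT : ∃ a b, W.getLast? = some a ∧ T.head? = some b ∧ (a, b) ∈ A) :
    IsSourceSinkPath A (S ++ W ++ T) := by
  obtain ⟨a, b, ha, hb, hab⟩ := hSW
  obtain ⟨c, d, hc, hd, hcd⟩ := hWT
  have hS₀ : S ≠ [] := by rintro rfl; simp at ha
  have hW₀ : W ≠ [] := by rintro rfl; simp at hb
  have hT₀ : T ≠ [] := by rintro rfl; simp at hd
  have hchain : IsChain (ArcAdj A) (S ++ W ++ T) := by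
    refine (hS.1.append hW ?_).append hT.1 ?_
    · simpa [ha, hb, ArcAdj] using hab
    · simpa [getLast?_append_of_ne_nil _ hW₀, hc, hd, ArcAdj] using hcd
  refine ⟨?_, hchain, h.nodup hchain, ?_, ?_⟩
  · have := length_pos_of_ne_nil hS₀
    have := length_pos_of_ne_nil hT₀
    simp only [length_append]
    omega
  · rw [append_assoc, head?_append_of_ne_nil _ hS₀]
    exact hS.2
  · rw [getLast?_append_of_ne_nil _ hT₀]
    exact hT.2

end Digraphs

section Finite

variable {A : Finset (V × V)} {u v : V}

theorem IsDAG.exists_isWalkToSink (h : IsDAG A) (b : V) :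
    ∃ T, IsWalkToSink A T ∧ T.head? = some b := by
  obtain ⟨t, hbt, ht⟩ := exists_reflTransGen_forall_not_rel h b
  obtain ⟨l, hl, hlast⟩ := exists_isChain_cons_of_relationReflTransGen hbt
  exact ⟨b :: l, ⟨hl, t, by rw [getLast?_eq_some_getLast (cons_ne_nil _ _), hlast],
    isSink_iff.2 ht⟩, rfl⟩

theorem IsDAG.exists_isWalkFromSource (h : IsDAG A) (a : V) :
    ∃ S, IsWalkFromSource A S ∧ S.getLast? = some a := by
  obtain ⟨s, has, hs⟩ := exists_reflTransGen_forall_not_rel (r := Function.swap (ArcAdj A))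
    (fun v hv => h v (transGen_swap.1 hv)) a
  obtain ⟨l, hl, hlast⟩ := exists_isChain_cons_of_relationReflTransGen has
  refine ⟨(a :: l).reverse, ⟨isChain_reverse.2 hl, s, ?_, isSource_iff.2 hs⟩, by simp⟩
  rw [head?_reverse, getLast?_eq_some_getLast (cons_ne_nil _ _), hlast]

theorem IsDAG.exists_two_isWalkFromSource (h : IsDAG A) (hu : 2 ≤ inDeg A u) :
    ∃ S₁ S₂, S₁ ≠ S₂ ∧ (IsWalkFromSource A S₁ ∧ ∃ a, S₁.getLast? = some a ∧ (a, u) ∈ A) ∧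
      (IsWalkFromSource A S₂ ∧ ∃ a, S₂.getLast? = some a ∧ (a, u) ∈ A) := by
  obtain ⟨a₁, a₂, hne, h₁, h₂⟩ := exists_ne_of_two_le_inDeg hu
  obtain ⟨S₁, hS₁, hl₁⟩ := h.exists_isWalkFromSource a₁
  obtain ⟨S₂, hS₂, hl₂⟩ := h.exists_isWalkFromSource a₂
  refine ⟨S₁, S₂, ?_, ⟨hS₁, a₁, hl₁, h₁⟩, hS₂, a₂, hl₂, h₂⟩
  rintro rfl
  exact hne (Option.some_injective _ (hl₁.symm.trans hl₂))

theorem IsDAG.exists_two_isWalkToSink (h : IsDAG A) (hv : 2 ≤ outDeg A v) :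
    ∃ T₁ T₂, T₁ ≠ T₂ ∧ (IsWalkToSink A T₁ ∧ ∃ b, T₁.head? = some b ∧ (v, b) ∈ A) ∧
      (IsWalkToSink A T₂ ∧ ∃ b, T₂.head? = some b ∧ (v, b) ∈ A) := by
  obtain ⟨b₁, b₂, hne, h₁, h₂⟩ := exists_ne_of_two_le_outDeg hv
  obtain ⟨T₁, hT₁, hl₁⟩ := h.exists_isWalkToSink b₁
  obtain ⟨T₂, hT₂, hl₂⟩ := h.exists_isWalkToSink b₂
  refine ⟨T₁, T₂, ?_, ⟨hT₁, b₁, hl₁, h₁⟩, hT₂, b₂, hl₂, h₂⟩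
  rintro rfl
  exact hne (Option.some_injective _ (hl₁.symm.trans hl₂))

theorem IsFunnel.noMergeReachesSplit (hfun : IsFunnel A) (hdag : IsDAG A) :
    NoMergeReachesSplit A := by
  intro u v hu hv huv
  obtain ⟨S₁, S₂, hS, hS₁, hS₂⟩ := hdag.exists_two_isWalkFromSource hu
  obtain ⟨T₁, T₂, hT, hT₁, hT₂⟩ := hdag.exists_two_isWalkToSink hv
  obtain ⟨W, hW, hWv⟩ := exists_isChain_cons_of_relationReflTransGen huv
  have path : ∀ {S T : List V}, (IsWalkFromSource A S ∧ ∃ a, S.getLast? = some a ∧ (a, u) ∈ A) →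
      (IsWalkToSink A T ∧ ∃ b, T.head? = some b ∧ (v, b) ∈ A) →
      IsSourceSinkPath A (S ++ u :: W ++ T) := by
    rintro S T ⟨hS, a, ha, hau⟩ ⟨hT, b, hb, hvb⟩
    refine hdag.isSourceSinkPath_append_append hS hW hT ⟨a, u, ha, rfl, hau⟩ ⟨v, b, ?_, hb, hvb⟩
    rw [getLast?_eq_some_getLast (cons_ne_nil _ _), hWv]
  obtain ⟨e, he, hpriv⟩ := hfun _ (path hS₁ hT₁)
  rcases mem_arcsOf_append_append (cons_ne_nil u W) he with hSW | hWT
  · have heQ := (prefix_append (S₁ ++ u :: W) T₂).isInfix.arcsOf_subset hSW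
    exact hT (append_cancel_left (hpriv.unique ⟨path hS₁ hT₁, he⟩ ⟨path hS₁ hT₂, heQ⟩))
  · have heQ := (suffix_append S₂ (u :: W ++ T₁)).isInfix.arcsOf_subset hWT
    rw [← append_assoc] at heQ
    exact hS (append_cancel_right (append_cancel_right
      (hpriv.unique ⟨path hS₁ hT₁, he⟩ ⟨path hS₂ hT₁, heQ⟩)))

end Finite

/-- Every subgraph of a funnel is a funnel (being a funnel is
hereditary under deletion of vertices or arcs; deleting vertices corresponds to
deleting all their incident arcs). -/
theorem funnel_hereditary (A B : Finset (V × V)) (hdag : IsDAG A)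
    (hfun : IsFunnel A) (hsub : B ⊆ A) : IsFunnel B :=
  ((hfun.noMergeReachesSplit hdag).subset hsub).isFunnel
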